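/- arXiv:1911.04132 — 2 statements merged into one kernel-verified Lean document; each statement's English description precedes it below -/
import Mathlib

section
/- Suppose in addition that the interlacing is strict, i.e., a₁ > b₁ > a₂ > b₂ > ⋯ > a_k > b_k > a_{k+1}. Then there exist unique positive real numbers δ₁, …, δ_k such that Ã_{k+1}(a, b) = { z ∈ ℂ^k : |z_i|² = δ_i for i = 1, …, k }. In particular, Ã_{k+1}(a, b) is a real k-dimensional torus. -/
open Polynomial

/-- The `(k+1) × (k+1)` Hermitian "arrow" matrix whose upper-left `k × k` block is
`diag(b 1, …, b k)`, whose `(i, k+1)` entry is `conj (z i)` and `(k+1, i)` entry is `z i`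
for `1 ≤ i ≤ k` (1-based indexing of the sequences), and whose `(k+1, k+1)` entry is `w`. -/
def Zarrow (k : ℕ) (b : ℕ → ℝ) (w : ℝ) (z : ℕ → ℂ) :
    Matrix (Fin (k + 1)) (Fin (k + 1)) ℂ :=
  Matrix.of fun i j =>
    if (i : ℕ) < k then
      if (j : ℕ) < k then (if i = j then (b ((i : ℕ) + 1) : ℂ) else 0)
      else (starRingEnd ℂ) (z ((i : ℕ) + 1))
    else
      if (j : ℕ) < k then z ((j : ℕ) + 1)
      else (w : ℂ)

/-- The matrix `Z_{(a,b)}(z)`: the arrow matrix with corner entry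
`z_{k+1} = Σ_{i=1}^{k+1} aᵢ − Σ_{i=1}^{k} bᵢ`. -/
def Zab (k : ℕ) (a b : ℕ → ℝ) (z : ℕ → ℂ) : Matrix (Fin (k + 1)) (Fin (k + 1)) ℂ :=
  Zarrow k b ((∑ i ∈ Finset.Icc 1 (k + 1), a i) - ∑ i ∈ Finset.Icc 1 k, b i) z

/-- `Ã_{k+1}(a, b)`: those `z` (with relevant coordinates `z 1, …, z k`) for which
`Z_{(a,b)}(z)` has characteristic polynomial `∏_{i=1}^{k+1}(X − aᵢ)`. -/
def Atilde (k : ℕ) (a b : ℕ → ℝ) : Set (ℕ → ℂ) :=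
  {z | (Zab k a b z).charpoly = ∏ i ∈ Finset.Icc 1 (k + 1), (X - C (a i : ℂ))}

/-! ### Auxiliary lemmas -/

section Reindex

@[to_additive sum_Icc_one_eq_fin]
lemma prod_Icc_one_eq_fin {M : Type*} [CommMonoid M] (m : ℕ) (f : ℕ → M) :
    ∏ i ∈ Finset.Icc 1 m, f i = ∏ i : Fin m, f ((i : ℕ) + 1) := by
  rw [show (∏ i : Fin m, f ((i : ℕ) + 1)) = ∏ i ∈ Finset.range m, f (i + 1) from
    Fin.prod_univ_eq_prod_range (fun i => f (i + 1)) m]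
  induction m with
  | zero => simp
  | succ n ih =>
      rw [Finset.prod_Icc_succ_top (by omega), Finset.prod_range_succ, ih]

@[to_additive]
lemma prod_fin_erase_eq_Icc {M : Type*} [CommMonoid M] (m : ℕ) (i0 : Fin m) (f : ℕ → M) :
    ∏ j ∈ Finset.univ.erase i0, f ((j : ℕ) + 1)
      = ∏ j ∈ (Finset.Icc 1 m).erase ((i0 : ℕ) + 1), f j := by
  refine Finset.prod_nbij' (fun j : Fin m => (j : ℕ) + 1)
    (fun n => if h : n - 1 < m then (⟨n - 1, h⟩ : Fin m) else i0) ?_ ?_ ?_ ?_ ?_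
  · intro j hj
    simp only [Finset.mem_erase, Finset.mem_univ, and_true] at hj
    simp only [Finset.mem_erase, Finset.mem_Icc]
    exact ⟨fun hc => hj (by ext; omega), by omega, by omega⟩
  · intro n hn
    simp only [Finset.mem_erase, Finset.mem_Icc] at hn
    have h1 : n - 1 < m := by omega
    simp only [h1, dif_pos, Finset.mem_erase, Finset.mem_univ, and_true]
    intro hc
    apply hn.1
    have := congrArg Fin.val hc
    simp only at this
    omega
  · intro j hj
    have h1 : (j : ℕ) + 1 - 1 < m := by omega
    simp only [h1, dif_pos]
    ext; simp
  · intro n hn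
    simp only [Finset.mem_erase, Finset.mem_Icc] at hn
    have h1 : n - 1 < m := by omega
    simp only [h1, dif_pos]
    omega
  · intro j hj
    rfl

end Reindex

section Charpoly

lemma eval_charpoly' {n : ℕ} (M : Matrix (Fin n) (Fin n) ℂ) (t : ℂ) :
    M.charpoly.eval t = (t • (1 : Matrix (Fin n) (Fin n) ℂ) - M).det := by
  rw [Matrix.charpoly, ← coe_evalRingHom, RingHom.map_det]
  congr 1
  ext i j
  by_cases h : i = j
  · subst h
    simp [Matrix.charmatrix_apply, Matrix.one_apply, Matrix.diagonal_apply]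
  · simp [Matrix.charmatrix_apply_ne _ _ _ h, Matrix.one_apply_ne h, Matrix.diagonal_apply_ne _ h,
      RingHom.mapMatrix_apply, Matrix.map_apply]

lemma det_resolvent_arrow (k : ℕ) (b : ℕ → ℝ) (w : ℝ) (z : ℕ → ℂ) (t : ℂ)
    (ht : ∀ i : Fin k, t ≠ (b ((i : ℕ) + 1) : ℂ)) :
    (t • (1 : Matrix (Fin (k+1)) (Fin (k+1)) ℂ) - Zarrow k b w z).det
      = (∏ i : Fin k, (t - (b ((i : ℕ) + 1) : ℂ))) * (t - (w : ℂ))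
        - ∑ i : Fin k, (Complex.normSq (z ((i : ℕ) + 1)) : ℂ)
            * ∏ j ∈ Finset.univ.erase i, (t - (b ((j : ℕ) + 1) : ℂ)) := by
  set D : Matrix (Fin k) (Fin k) ℂ :=
    Matrix.diagonal (fun i : Fin k => t - (b ((i : ℕ) + 1) : ℂ)) with hD
  set Dinv : Matrix (Fin k) (Fin k) ℂ :=
    Matrix.diagonal (fun i : Fin k => (t - (b ((i : ℕ) + 1) : ℂ))⁻¹) with hDinv
  set u : Matrix (Fin k) (Fin 1) ℂ :=
    Matrix.of (fun i _ => -((starRingEnd ℂ) (z ((i : ℕ) + 1)))) with hu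
  set v : Matrix (Fin 1) (Fin k) ℂ := Matrix.of (fun _ j => -(z ((j : ℕ) + 1))) with hv
  set W : Matrix (Fin 1) (Fin 1) ℂ := Matrix.of (fun _ _ => t - (w : ℂ)) with hW
  have hsub : (t • (1 : Matrix (Fin (k+1)) (Fin (k+1)) ℂ) - Zarrow k b w z).submatrix
      finSumFinEquiv finSumFinEquiv = Matrix.fromBlocks D u v W := by
    ext p q
    cases p with
    | inl i =>
        cases q with
        | inl j =>
            have hij : (Fin.castAdd 1 i = Fin.castAdd 1 j) ↔ i = j := by
              constructor
              · intro h
                have h' := congrArg (fun x : Fin (k+1) => (x : ℕ)) h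
                simp only [Fin.coe_castAdd] at h'
                exact Fin.ext h'
              · intro h; subst h; rfl
            by_cases h : i = j
            · subst h
              simp [Matrix.submatrix_apply, finSumFinEquiv_apply_left, Matrix.sub_apply,
                Matrix.smul_apply, Matrix.one_apply, Zarrow, i.isLt, hD, hij, smul_eq_mul]
            · have h2 : ¬ (Fin.castAdd 1 i = Fin.castAdd 1 j) := fun hc => h (hij.1 hc)
              simp [Matrix.submatrix_apply, finSumFinEquiv_apply_left, Matrix.sub_apply,
                Matrix.smul_apply, Matrix.one_apply, Zarrow, i.isLt, j.isLt, hD,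
                Matrix.diagonal_apply_ne _ h, h, h2, smul_eq_mul]
        | inr j =>
            have hne : Fin.castAdd 1 i ≠ Fin.natAdd k j := by
              intro hc
              have := congrArg Fin.val hc
              simp only [Fin.coe_castAdd, Fin.coe_natAdd] at this
              omega
            have hk : ¬ (k + (j : ℕ) < k) := by omega
            simp [Matrix.submatrix_apply, finSumFinEquiv_apply_left, finSumFinEquiv_apply_right,
              Matrix.sub_apply, Matrix.smul_apply, Matrix.one_apply_ne hne, Zarrow, i.isLt, hk,
              hu, smul_eq_mul]
    | inr i =>
        cases q with
        | inl j =>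
            have hne : Fin.natAdd k i ≠ Fin.castAdd 1 j := by
              intro hc
              have := congrArg Fin.val hc
              simp only [Fin.coe_castAdd, Fin.coe_natAdd] at this
              omega
            have hk : ¬ (k + (i : ℕ) < k) := by omega
            simp [Matrix.submatrix_apply, finSumFinEquiv_apply_left, finSumFinEquiv_apply_right,
              Matrix.sub_apply, Matrix.smul_apply, Matrix.one_apply_ne hne, Zarrow, j.isLt, hk,
              hv, smul_eq_mul]
        | inr j =>
            have hij : i = j := Subsingleton.elim i j
            subst hij
            have hk : ¬ (k + (i : ℕ) < k) := by omega
            simp [Matrix.submatrix_apply, finSumFinEquiv_apply_right, Matrix.sub_apply,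
              Matrix.smul_apply, Matrix.one_apply_eq, Zarrow, hk, hW, smul_eq_mul]
  have hDdet : D.det = ∏ i : Fin k, (t - (b ((i : ℕ) + 1) : ℂ)) := by
    simp [hD, Matrix.det_diagonal]
  have hDdet_ne : D.det ≠ 0 := by
    rw [hDdet]
    exact Finset.prod_ne_zero_iff.2 fun i _ => sub_ne_zero.2 (ht i)
  have : Invertible D := D.invertibleOfIsUnitDet (Ne.isUnit hDdet_ne)
  have hinvOf : ⅟D = Dinv := by
    apply invOf_eq_right_inv
    rw [hD, hDinv, Matrix.diagonal_mul_diagonal]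
    have : (fun i : Fin k => (t - (b ((i : ℕ) + 1) : ℂ)) * (t - (b ((i : ℕ) + 1) : ℂ))⁻¹)
        = fun _ => (1 : ℂ) := funext fun i => mul_inv_cancel₀ (sub_ne_zero.2 (ht i))
    rw [this, Matrix.diagonal_one]
  have hentry : (W - v * Dinv * u) 0 0
      = (t - (w : ℂ)) - ∑ i : Fin k,
          (Complex.normSq (z ((i : ℕ) + 1)) : ℂ) * (t - (b ((i : ℕ) + 1) : ℂ))⁻¹ := by
    have h1 : (v * Dinv * u) 0 0 = ∑ j : Fin k, (v * Dinv) 0 j * u j 0 := Matrix.mul_apply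
    have h2 : ∀ j : Fin k, (v * Dinv) 0 j = v 0 j * (t - (b ((j : ℕ) + 1) : ℂ))⁻¹ := by
      intro j
      rw [hDinv, Matrix.mul_diagonal]
    rw [Matrix.sub_apply, h1]
    simp only [h2]
    simp only [hW, Matrix.of_apply, hu, hv]
    congr 1
    apply Finset.sum_congr rfl
    intro j _
    rw [show -(z ((j : ℕ) + 1)) * (t - (b ((j : ℕ) + 1) : ℂ))⁻¹
        * -((starRingEnd ℂ) (z ((j : ℕ) + 1)))
        = (z ((j : ℕ) + 1) * (starRingEnd ℂ) (z ((j : ℕ) + 1)))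
          * (t - (b ((j : ℕ) + 1) : ℂ))⁻¹ from by ring, Complex.mul_conj]
  calc (t • (1 : Matrix (Fin (k+1)) (Fin (k+1)) ℂ) - Zarrow k b w z).det
      = (Matrix.fromBlocks D u v W).det := by
        rw [← hsub, Matrix.det_submatrix_equiv_self]
    _ = D.det * (W - v * ⅟D * u).det := Matrix.det_fromBlocks₁₁ _ _ _ _
    _ = _ := by
        rw [hinvOf, hDdet, Matrix.det_fin_one, hentry, mul_sub, Finset.mul_sum]
        congr 1
        apply Finset.sum_congr rfl
        intro i _
        rw [← Finset.mul_prod_erase Finset.univ _ (Finset.mem_univ i)]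
        field_simp [sub_ne_zero.2 (ht i)]

lemma charpoly_Zarrow (k : ℕ) (b : ℕ → ℝ) (w : ℝ) (z : ℕ → ℂ) :
    (Zarrow k b w z).charpoly
      = (∏ i ∈ Finset.Icc 1 k, (X - C (b i : ℂ))) * (X - C (w : ℂ))
        - ∑ i ∈ Finset.Icc 1 k, C (Complex.normSq (z i) : ℂ)
            * ∏ j ∈ (Finset.Icc 1 k).erase i, (X - C (b j : ℂ)) := by
  apply eq_of_infinite_eval_eq
  have hfin : ({t : ℂ | ∃ i : Fin k, t = (b ((i : ℕ) + 1) : ℂ)}).Finite :=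
    (Set.finite_range (fun i : Fin k => ((b ((i : ℕ) + 1) : ℂ)))).subset
      (by rintro t ⟨i, rfl⟩; exact ⟨i, rfl⟩)
  have hinf : ({t : ℂ | ∀ i : Fin k, t ≠ (b ((i : ℕ) + 1) : ℂ)}).Infinite := by
    have := hfin.infinite_compl
    have hset : {t : ℂ | ∃ i : Fin k, t = (b ((i : ℕ) + 1) : ℂ)}ᶜ
        = {t : ℂ | ∀ i : Fin k, t ≠ (b ((i : ℕ) + 1) : ℂ)} := by
      ext t; simp
    rwa [hset] at this
  apply hinf.mono
  intro t ht
  simp only [Set.mem_setOf_eq] at ht ⊢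
  rw [eval_charpoly', det_resolvent_arrow k b w z t ht]
  simp only [eval_sub, eval_mul, eval_prod, eval_finset_sum, eval_X, eval_C]
  rw [prod_Icc_one_eq_fin k (fun n => t - (b n : ℂ)),
    sum_Icc_one_eq_fin k (fun n => (Complex.normSq (z n) : ℂ)
      * ∏ j ∈ (Finset.Icc 1 k).erase n, (t - (b j : ℂ)))]
  congr 1
  apply Finset.sum_congr rfl
  intro i _
  rw [← prod_fin_erase_eq_Icc k i (fun n => t - (b n : ℂ))]

end Charpoly

section Ordering

lemma hba (k : ℕ) (a b : ℕ → ℝ)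
    (hab : ∀ i, 1 ≤ i → i ≤ k → b i < a i ∧ a (i + 1) < b i) :
    ∀ i j, 1 ≤ j → j ≤ i → i ≤ k → b i < a j := by
  intro i
  induction i with
  | zero => omega
  | succ n ih =>
      intro j hj1 hji hik
      rcases eq_or_lt_of_le hji with h | h
      · rw [h]; exact (hab (n+1) (by omega) hik).1
      · have hjn : j ≤ n := by omega
        have h1n : 1 ≤ n := le_trans hj1 hjn
        calc b (n+1) < a (n+1) := (hab (n+1) (by omega) hik).1
          _ < b n := (hab n h1n (by omega)).2
          _ < a j := ih j hj1 hjn (by omega)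

lemma hab2 (k : ℕ) (a b : ℕ → ℝ)
    (hab : ∀ i, 1 ≤ i → i ≤ k → b i < a i ∧ a (i + 1) < b i) :
    ∀ j i, 1 ≤ i → i < j → j ≤ k + 1 → a j < b i := by
  intro j
  induction j with
  | zero => omega
  | succ n ih =>
      intro i hi1 hij hjk
      have hin : i ≤ n := by omega
      have h1n : 1 ≤ n := le_trans hi1 hin
      have h1 : a (n+1) < b n := (hab n h1n (by omega)).2
      rcases eq_or_lt_of_le hin with h | h
      · rw [h]; exact h1
      · calc a (n+1) < b n := h1
          _ < a n := (hab n h1n (by omega)).1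
          _ < b i := ih i hi1 h (by omega)

lemma hbb (k : ℕ) (a b : ℕ → ℝ)
    (hab : ∀ i, 1 ≤ i → i ≤ k → b i < a i ∧ a (i + 1) < b i) :
    ∀ i j, 1 ≤ i → i < j → j ≤ k → b j < b i := fun i j hi1 hij hjk =>
  lt_trans (hab j (by omega) hjk).1 (hab2 k a b hab j i hi1 hij (by omega))

/-- the interpolation weights -/
noncomputable def delta (k : ℕ) (a b : ℕ → ℝ) (i : ℕ) : ℝ :=
  -(∏ j ∈ Finset.Icc 1 (k+1), (b i - a j)) / (∏ j ∈ (Finset.Icc 1 k).erase i, (b i - b j))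

lemma denom_ne (k : ℕ) (a b : ℕ → ℝ)
    (hab : ∀ i, 1 ≤ i → i ≤ k → b i < a i ∧ a (i + 1) < b i)
    (i : ℕ) (hi1 : 1 ≤ i) (hik : i ≤ k) :
    ∏ j ∈ (Finset.Icc 1 k).erase i, (b i - b j) ≠ 0 := by
  apply Finset.prod_ne_zero_iff.2
  intro j hj
  simp only [Finset.mem_erase, Finset.mem_Icc] at hj
  rcases lt_or_gt_of_ne hj.1 with h | h
  · exact sub_ne_zero.2 (ne_of_lt (hbb k a b hab j i hj.2.1 h hik))
  · exact sub_ne_zero.2 (ne_of_gt (hbb k a b hab i j hi1 h hj.2.2))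

lemma delta_lagrange (k : ℕ) (a b : ℕ → ℝ)
    (hab : ∀ i, 1 ≤ i → i ≤ k → b i < a i ∧ a (i + 1) < b i)
    (i : ℕ) (hi1 : 1 ≤ i) (hik : i ≤ k) :
    delta k a b i * ∏ j ∈ (Finset.Icc 1 k).erase i, (b i - b j)
      = -(∏ j ∈ Finset.Icc 1 (k+1), (b i - a j)) :=
  div_mul_cancel₀ _ (denom_ne k a b hab i hi1 hik)

lemma delta_pos (k : ℕ) (a b : ℕ → ℝ)
    (hab : ∀ i, 1 ≤ i → i ≤ k → b i < a i ∧ a (i + 1) < b i)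
    (i : ℕ) (hi1 : 1 ≤ i) (hik : i ≤ k) : 0 < delta k a b i := by
  have hD0 : (∏ j ∈ (Finset.Icc 1 k).erase i, (b i - b j)) ≠ 0 :=
    denom_ne k a b hab i hi1 hik
  have hsplitN : Finset.Icc 1 (k+1) = Finset.Ioc 0 i ∪ Finset.Ioc i (k+1) := by
    ext x
    simp only [Finset.mem_Icc, Finset.mem_union, Finset.mem_Ioc]
    omega
  have hsplitD : (Finset.Icc 1 k).erase i = Finset.Ioc 0 (i-1) ∪ Finset.Ioc i k := by
    ext x
    simp only [Finset.mem_Icc, Finset.mem_union, Finset.mem_Ioc, Finset.mem_erase]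
    omega
  have hdisjN : Disjoint (Finset.Ioc 0 i) (Finset.Ioc i (k+1)) := by
    apply Finset.disjoint_left.2
    intro x hx hx'
    simp only [Finset.mem_Ioc] at hx hx'
    omega
  have hdisjD : Disjoint (Finset.Ioc 0 (i-1)) (Finset.Ioc i k) := by
    apply Finset.disjoint_left.2
    intro x hx hx'
    simp only [Finset.mem_Ioc] at hx hx'
    omega
  have negflip : ∀ (s : Finset ℕ) (f : ℕ → ℝ),
      ∏ j ∈ s, (- f j) = (-1)^(s.card) * ∏ j ∈ s, f j := by
    intro s f
    rw [← Finset.prod_const, ← Finset.prod_mul_distrib]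
    apply Finset.prod_congr rfl
    intro j _
    ring
  have hP1 : 0 < ∏ j ∈ Finset.Ioc 0 i, (a j - b i) := by
    apply Finset.prod_pos
    intro j hj
    simp only [Finset.mem_Ioc] at hj
    exact sub_pos.2 (hba k a b hab i j (by omega) hj.2 hik)
  have hN2 : 0 < ∏ j ∈ Finset.Ioc i (k+1), (b i - a j) := by
    apply Finset.prod_pos
    intro j hj
    simp only [Finset.mem_Ioc] at hj
    exact sub_pos.2 (hab2 k a b hab j i hi1 hj.1 hj.2)
  have hQ1 : 0 < ∏ j ∈ Finset.Ioc 0 (i-1), (b j - b i) := by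
    apply Finset.prod_pos
    intro j hj
    simp only [Finset.mem_Ioc] at hj
    exact sub_pos.2 (hbb k a b hab j i (by omega) (by omega) hik)
  have hD2 : 0 < ∏ j ∈ Finset.Ioc i k, (b i - b j) := by
    apply Finset.prod_pos
    intro j hj
    simp only [Finset.mem_Ioc] at hj
    exact sub_pos.2 (hbb k a b hab i j hi1 hj.1 hj.2)
  have hNeq : (∏ j ∈ Finset.Icc 1 (k+1), (b i - a j))
      = ((-1)^i * ∏ j ∈ Finset.Ioc 0 i, (a j - b i)) * ∏ j ∈ Finset.Ioc i (k+1), (b i - a j) := by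
    rw [hsplitN, Finset.prod_union hdisjN]
    congr 1
    have : ∀ j ∈ Finset.Ioc 0 i, b i - a j = -(a j - b i) := fun j _ => by ring
    rw [Finset.prod_congr rfl this, negflip, Nat.card_Ioc, Nat.sub_zero]
  have hDeq : (∏ j ∈ (Finset.Icc 1 k).erase i, (b i - b j))
      = ((-1)^(i-1) * ∏ j ∈ Finset.Ioc 0 (i-1), (b j - b i))
        * ∏ j ∈ Finset.Ioc i k, (b i - b j) := by
    rw [hsplitD, Finset.prod_union hdisjD]
    congr 1
    have : ∀ j ∈ Finset.Ioc 0 (i-1), b i - b j = -(b j - b i) := fun j _ => by ring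
    rw [Finset.prod_congr rfl this, negflip, Nat.card_Ioc, Nat.sub_zero]
  have hsign : (-1 : ℝ)^i * (-1)^(i-1) = -1 := by
    obtain ⟨m, rfl⟩ : ∃ m, i = m + 1 := ⟨i - 1, by omega⟩
    rw [Nat.add_sub_cancel, ← pow_add, show m + 1 + m = 2*m+1 by omega, pow_succ, pow_mul]
    norm_num
  have hND : (∏ j ∈ Finset.Icc 1 (k+1), (b i - a j))
      * (∏ j ∈ (Finset.Icc 1 k).erase i, (b i - b j)) < 0 := by
    rw [hNeq, hDeq]
    have hpos : 0 < (∏ j ∈ Finset.Ioc 0 i, (a j - b i)) * (∏ j ∈ Finset.Ioc i (k+1), (b i - a j))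
        * ((∏ j ∈ Finset.Ioc 0 (i-1), (b j - b i)) * ∏ j ∈ Finset.Ioc i k, (b i - b j)) :=
      mul_pos (mul_pos hP1 hN2) (mul_pos hQ1 hD2)
    nlinarith [hsign, hpos]
  have hD2pos : 0 < (∏ j ∈ (Finset.Icc 1 k).erase i, (b i - b j))^2 :=
    lt_of_le_of_ne (sq_nonneg _) (Ne.symm (pow_ne_zero 2 hD0))
  have h2 : delta k a b i
      = (-((∏ j ∈ Finset.Icc 1 (k+1), (b i - a j))
          * (∏ j ∈ (Finset.Icc 1 k).erase i, (b i - b j))))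
        / (∏ j ∈ (Finset.Icc 1 k).erase i, (b i - b j))^2 := by
    rw [delta, div_eq_div_iff hD0 (pow_ne_zero 2 hD0)]
    ring
  rw [h2]
  exact div_pos (by linarith) hD2pos

end Ordering

section KeyPoly

lemma binj {k : ℕ} {a b : ℕ → ℝ}
    (hab : ∀ i, 1 ≤ i → i ≤ k → b i < a i ∧ a (i + 1) < b i) :
    Set.InjOn (fun n => ((b n : ℂ))) (Finset.Icc 1 k) := by
  intro x hx y hy hxy
  simp only [Finset.coe_Icc, Set.mem_Icc] at hx hy
  simp only [Complex.ofReal_inj] at hxy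
  by_contra hne
  rcases lt_or_gt_of_ne hne with h | h
  · exact absurd hxy (ne_of_gt (hbb k a b hab x y hx.1 h hy.2))
  · exact absurd hxy (ne_of_lt (hbb k a b hab y x hy.1 h hx.2))

lemma coeff_prod_XsubC (k : ℕ) (f : ℕ → ℂ) :
    (∏ i ∈ Finset.Icc 1 (k+1), (X - C (f i))).natDegree = k + 1 ∧
    (∏ i ∈ Finset.Icc 1 (k+1), (X - C (f i))).coeff (k+1) = 1 ∧
    (∏ i ∈ Finset.Icc 1 (k+1), (X - C (f i))).coeff k = -∑ i ∈ Finset.Icc 1 (k+1), f i := by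
  have hmon : ∀ i ∈ Finset.Icc 1 (k+1), Monic (X - C (f i)) := fun i _ => monic_X_sub_C _
  have hmonP : Monic (∏ i ∈ Finset.Icc 1 (k+1), (X - C (f i))) :=
    monic_prod_of_monic _ _ hmon
  have hdeg : (∏ i ∈ Finset.Icc 1 (k+1), (X - C (f i))).natDegree = k + 1 := by
    rw [natDegree_prod_of_monic _ _ hmon]
    simp [natDegree_X_sub_C, Nat.card_Icc]
  refine ⟨hdeg, ?_, ?_⟩
  · have := hmonP.coeff_natDegree
    rwa [hdeg] at this
  · have h1 : (∏ i ∈ Finset.Icc 1 (k+1), (X - C (f i))).nextCoeff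
        = ∑ i ∈ Finset.Icc 1 (k+1), nextCoeff (X - C (f i)) :=
      Monic.nextCoeff_prod _ _ hmon
    have h2 : (∏ i ∈ Finset.Icc 1 (k+1), (X - C (f i))).nextCoeff
        = (∏ i ∈ Finset.Icc 1 (k+1), (X - C (f i))).coeff k := by
      rw [nextCoeff_of_natDegree_pos (by rw [hdeg]; omega), hdeg]
      norm_num
    rw [← h2, h1]
    simp [nextCoeff_X_sub_C]

lemma key_poly (k : ℕ) (a b : ℕ → ℝ)
    (hab : ∀ i, 1 ≤ i → i ≤ k → b i < a i ∧ a (i + 1) < b i) (hk : 1 ≤ k) :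
    (∏ i ∈ Finset.Icc 1 k, (X - C (b i : ℂ)))
        * (X - C (((∑ i ∈ Finset.Icc 1 (k+1), a i) - ∑ i ∈ Finset.Icc 1 k, b i : ℝ) : ℂ))
      - ∑ i ∈ Finset.Icc 1 k, C ((delta k a b i : ℝ) : ℂ)
          * ∏ j ∈ (Finset.Icc 1 k).erase i, (X - C (b j : ℂ))
    = ∏ i ∈ Finset.Icc 1 (k+1), (X - C (a i : ℂ)) := by
  set w : ℝ := (∑ i ∈ Finset.Icc 1 (k+1), a i) - ∑ i ∈ Finset.Icc 1 k, b i with hw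
  set c : ℕ → ℂ := fun j => if j ≤ k then (b j : ℂ) else (w : ℂ) with hc
  have hPc : (∏ i ∈ Finset.Icc 1 k, (X - C (b i : ℂ))) * (X - C (w : ℂ))
      = ∏ i ∈ Finset.Icc 1 (k+1), (X - C (c i)) := by
    rw [Finset.prod_Icc_succ_top (by omega : 1 ≤ k + 1)]
    congr 1
    · apply Finset.prod_congr rfl
      intro j hj
      simp only [Finset.mem_Icc] at hj
      simp [hc, hj.2]
    · simp [hc]
  set S : Polynomial ℂ := ∑ i ∈ Finset.Icc 1 k, C ((delta k a b i : ℝ) : ℂ)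
      * ∏ j ∈ (Finset.Icc 1 k).erase i, (X - C (b j : ℂ)) with hS
  have hcardIcc : (Finset.Icc 1 k).card = k := by simp [Nat.card_Icc]
  have hdegS : S.degree < (k : ℕ) := by
    rw [hS]
    apply lt_of_le_of_lt (degree_sum_le _ _)
    rw [Finset.sup_lt_iff (by exact_mod_cast WithBot.bot_lt_coe k)]
    intro i hi
    apply lt_of_le_of_lt (degree_mul_le _ _)
    have hLmon : Monic (∏ j ∈ (Finset.Icc 1 k).erase i, (X - C (b j : ℂ))) :=
      monic_prod_of_monic _ _ (fun j _ => monic_X_sub_C _)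
    have hLdeg : (∏ j ∈ (Finset.Icc 1 k).erase i, (X - C (b j : ℂ))).natDegree = k - 1 := by
      rw [natDegree_prod_of_monic _ _ (fun j _ => monic_X_sub_C _)]
      simp [natDegree_X_sub_C, Finset.card_erase_of_mem hi, hcardIcc]
    have : (∏ j ∈ (Finset.Icc 1 k).erase i,
        (X - C (b j : ℂ))).degree = ((k - 1 : ℕ) : WithBot ℕ) := by
      rw [degree_eq_natDegree hLmon.ne_zero, hLdeg]
    calc degree (C ((delta k a b i : ℝ) : ℂ))
          + degree (∏ j ∈ (Finset.Icc 1 k).erase i, (X - C (b j : ℂ)))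
        ≤ 0 + ((k - 1 : ℕ) : WithBot ℕ) := add_le_add degree_C_le (le_of_eq this)
      _ = ((k - 1 : ℕ) : WithBot ℕ) := zero_add _
      _ < (k : ℕ) := by exact_mod_cast (by omega : k - 1 < k)
  have hPcfacts := coeff_prod_XsubC k c
  have hPafacts := coeff_prod_XsubC k (fun i => (a i : ℂ))
  have hsumc : ∑ i ∈ Finset.Icc 1 (k+1), c i = ∑ i ∈ Finset.Icc 1 (k+1), ((a i : ℂ)) := by
    rw [Finset.sum_Icc_succ_top (by omega : 1 ≤ k + 1)]
    have : ∑ i ∈ Finset.Icc 1 k, c i = ∑ i ∈ Finset.Icc 1 k, ((b i : ℂ)) := by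
      apply Finset.sum_congr rfl
      intro j hj
      simp only [Finset.mem_Icc] at hj
      simp [hc, hj.2]
    rw [this]
    have hck : c (k+1) = (w : ℂ) := by simp [hc]
    rw [hck, hw]
    push_cast
    ring
  have hdegPP : ((∏ i ∈ Finset.Icc 1 (k+1), (X - C (c i)))
      - ∏ i ∈ Finset.Icc 1 (k+1), (X - C ((a i : ℂ)))).degree < ((k : ℕ) : WithBot ℕ) := by
    rw [degree_lt_iff_coeff_zero]
    intro m hm
    rw [coeff_sub]
    rcases Nat.lt_or_ge m (k+1) with h | h
    · have hmk : m = k := by omega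
      rw [hmk, hPcfacts.2.2, hPafacts.2.2, hsumc, sub_self]
    · rcases Nat.eq_or_lt_of_le h with h' | h'
      · rw [← h', hPcfacts.2.1, hPafacts.2.1, sub_self]
      · rw [coeff_eq_zero_of_natDegree_lt (by rw [hPcfacts.1]; omega),
          coeff_eq_zero_of_natDegree_lt (by rw [hPafacts.1]; omega), sub_self]
  rw [hPc]
  refine eq_of_degree_sub_lt_of_eval_index_eq (v := fun n => ((b n : ℂ)))
    (Finset.Icc 1 k) (binj hab) ?_ ?_
  · rw [hcardIcc]
    have : (∏ i ∈ Finset.Icc 1 (k+1), (X - C (c i))) - S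
        - ∏ i ∈ Finset.Icc 1 (k+1), (X - C ((a i : ℂ)))
        = ((∏ i ∈ Finset.Icc 1 (k+1), (X - C (c i)))
            - ∏ i ∈ Finset.Icc 1 (k+1), (X - C ((a i : ℂ)))) - S := by ring
    rw [this]
    exact lt_of_le_of_lt (degree_sub_le _ _) (max_lt hdegPP hdegS)
  · intro m hm
    have hm' := hm
    simp only [Finset.mem_Icc] at hm'
    have hPb0 : eval ((b m : ℂ)) (∏ i ∈ Finset.Icc 1 (k+1), (X - C (c i))) = 0 := by
      rw [eval_prod]
      apply Finset.prod_eq_zero (Finset.mem_Icc.2 ⟨hm'.1, by omega⟩ :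
        m ∈ Finset.Icc 1 (k+1))
      simp [hc, hm'.2]
    have hSeval : eval ((b m : ℂ)) S
        = ((delta k a b m : ℝ) : ℂ)
          * ∏ j ∈ (Finset.Icc 1 k).erase m, ((b m : ℂ) - (b j : ℂ)) := by
      rw [hS, eval_finset_sum]
      rw [Finset.sum_eq_single_of_mem m hm]
      · simp [eval_prod]
      · intro i hi hne
        have hmem : m ∈ (Finset.Icc 1 k).erase i := Finset.mem_erase.2 ⟨hne.symm, hm⟩
        rw [eval_mul, eval_prod, Finset.prod_eq_zero hmem (by simp), mul_zero]
    rw [eval_sub, hPb0, hSeval, zero_sub, eval_prod]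
    have hlag := delta_lagrange k a b hab m hm'.1 hm'.2
    have : ((delta k a b m * ∏ j ∈ (Finset.Icc 1 k).erase m, (b m - b j) : ℝ) : ℂ)
        = ((-(∏ j ∈ Finset.Icc 1 (k+1), (b m - a j)) : ℝ) : ℂ) := by rw [hlag]
    push_cast at this
    rw [← neg_eq_iff_eq_neg] at this
    simpa using this

end KeyPoly

/-- evaluation of a Lagrange-type sum at a node -/
lemma eval_lag_sum (k m : ℕ) (hm : m ∈ Finset.Icc 1 k) (b : ℕ → ℝ) (c : ℕ → ℂ) :
    eval ((b m : ℂ)) (∑ i ∈ Finset.Icc 1 k, C (c i)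
        * ∏ j ∈ (Finset.Icc 1 k).erase i, (X - C (b j : ℂ)))
      = c m * ∏ j ∈ (Finset.Icc 1 k).erase m, ((b m : ℂ) - (b j : ℂ)) := by
  rw [eval_finset_sum, Finset.sum_eq_single_of_mem m hm]
  · simp [eval_prod]
  · intro i hi hne
    have hmem : m ∈ (Finset.Icc 1 k).erase i := Finset.mem_erase.2 ⟨hne.symm, hm⟩
    rw [eval_mul, eval_prod, Finset.prod_eq_zero hmem (by simp), mul_zero]

/-- If the interlacing is strict,
`a₁ > b₁ > a₂ > ⋯ > a_k > b_k > a_{k+1}`, then there exist unique positive reals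
`δ₁, …, δ_k` with `Ã_{k+1}(a,b) = { z : |zᵢ|² = δᵢ, i = 1, …, k }`
(uniqueness means: any other such positive tuple agrees with `δ` on `1, …, k`). -/
theorem statement4 (k : ℕ) (hk : 1 ≤ k) (a b : ℕ → ℝ)
    (hab : ∀ i, 1 ≤ i → i ≤ k → b i < a i ∧ a (i + 1) < b i) :
    ∃ δ : ℕ → ℝ,
      ((∀ i, 1 ≤ i → i ≤ k → 0 < δ i) ∧
        Atilde k a b = {z : ℕ → ℂ | ∀ i, 1 ≤ i → i ≤ k → Complex.normSq (z i) = δ i}) ∧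
      ∀ δ' : ℕ → ℝ,
        ((∀ i, 1 ≤ i → i ≤ k → 0 < δ' i) ∧
          Atilde k a b = {z : ℕ → ℂ | ∀ i, 1 ≤ i → i ≤ k → Complex.normSq (z i) = δ' i}) →
        ∀ i, 1 ≤ i → i ≤ k → δ' i = δ i := by
  have hkey := key_poly k a b hab hk
  have hset : Atilde k a b
      = {z : ℕ → ℂ | ∀ i, 1 ≤ i → i ≤ k → Complex.normSq (z i) = delta k a b i} := by
    ext z
    simp only [Atilde, Set.mem_setOf_eq, Zab]
    rw [charpoly_Zarrow]
    constructor
    · intro h i hi1 hik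
      have hSz : (∑ i ∈ Finset.Icc 1 k, C ((Complex.normSq (z i) : ℝ) : ℂ)
            * ∏ j ∈ (Finset.Icc 1 k).erase i, (X - C (b j : ℂ)))
          = ∑ i ∈ Finset.Icc 1 k, C ((delta k a b i : ℝ) : ℂ)
            * ∏ j ∈ (Finset.Icc 1 k).erase i, (X - C (b j : ℂ)) := by
        have h2 := h.trans hkey.symm
        exact sub_right_inj.1 h2
      have hm : i ∈ Finset.Icc 1 k := Finset.mem_Icc.2 ⟨hi1, hik⟩
      have := congrArg (eval ((b i : ℂ))) hSz
      rw [eval_lag_sum k i hm b _, eval_lag_sum k i hm b _] at this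
      have hprod : (∏ j ∈ (Finset.Icc 1 k).erase i, ((b i : ℂ) - (b j : ℂ))) ≠ 0 := by
        have := denom_ne k a b hab i hi1 hik
        intro hc
        apply this
        have : ((∏ j ∈ (Finset.Icc 1 k).erase i, (b i - b j) : ℝ) : ℂ)
            = ∏ j ∈ (Finset.Icc 1 k).erase i, ((b i : ℂ) - (b j : ℂ)) := by
          push_cast
          rfl
        exact_mod_cast this.trans hc
      have := mul_right_cancel₀ hprod this
      exact_mod_cast this
    · intro h
      have hSz : (∑ i ∈ Finset.Icc 1 k, C ((Complex.normSq (z i) : ℝ) : ℂ)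
            * ∏ j ∈ (Finset.Icc 1 k).erase i, (X - C (b j : ℂ)))
          = ∑ i ∈ Finset.Icc 1 k, C ((delta k a b i : ℝ) : ℂ)
            * ∏ j ∈ (Finset.Icc 1 k).erase i, (X - C (b j : ℂ)) := by
        apply Finset.sum_congr rfl
        intro i hi
        simp only [Finset.mem_Icc] at hi
        rw [h i hi.1 hi.2]
      rw [hSz, hkey]
  refine ⟨delta k a b, ⟨fun i hi1 hik => delta_pos k a b hab i hi1 hik, hset⟩, ?_⟩
  rintro δ' ⟨hδ'pos, hδ'set⟩ i hi1 hik
  set z : ℕ → ℂ := fun j => ((Real.sqrt (delta k a b j) : ℝ) : ℂ) with hz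
  have hzmem : z ∈ Atilde k a b := by
    rw [hset]
    intro j hj1 hjk
    simp only [hz, Complex.normSq_ofReal]
    exact Real.mul_self_sqrt (le_of_lt (delta_pos k a b hab j hj1 hjk))
  have hz' : z ∈ {z : ℕ → ℂ | ∀ i, 1 ≤ i → i ≤ k → Complex.normSq (z i) = δ' i} := by
    rw [← hδ'set]
    exact hzmem
  have h1 := hz' i hi1 hik
  have h2 : Complex.normSq (z i) = delta k a b i := by
    simp only [hz, Complex.normSq_ofReal]
    exact Real.mul_self_sqrt (le_of_lt (delta_pos k a b hab i hi1 hik))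
  rw [← h1, h2]
end

section
/- Let 1 ≤ j and ℓ ≥ 1 with j + ℓ ≤ k, and suppose a_j > b_j = a_{j+1} = ⋯ = a_{j+ℓ} > b_{j+ℓ}. Let a′ be obtained from a by deleting a_{j+1}, …, a_{j+ℓ}, and let b′ be obtained from b by deleting b_j, …, b_{j+ℓ−1}. Then z = (z₁, …, z_k) ∈ Ã_{k+1}(a, b) if and only if z_j = z_{j+1} = ⋯ = z_{j+ℓ−1} = 0 and (z₁, …, z_{j−1}, z_{j+ℓ}, …, z_k) ∈ Ã_{k−ℓ+1}(a′, b′). -/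
open Polynomial Finset Matrix

variable {R : Type*} [CommRing R]

def arrowM {k : ℕ} (d u v : Fin k → R) (w : R) : Matrix (Fin (k+1)) (Fin (k+1)) R :=
  Matrix.of fun i =>
    Fin.lastCases (motive := fun _ => Fin (k+1) → R)
      (fun j => Fin.lastCases (motive := fun _ => R) w v j)
      (fun i' j => Fin.lastCases (motive := fun _ => R) (u i')
        (fun j' => if i' = j' then d i' else 0) j) i

@[simp] lemma arrowM_cc {k : ℕ} (d u v : Fin k → R) (w : R) (i j : Fin k) :
    arrowM d u v w i.castSucc j.castSucc = if i = j then d i else 0 := by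
  simp [arrowM]

@[simp] lemma arrowM_cl {k : ℕ} (d u v : Fin k → R) (w : R) (i : Fin k) :
    arrowM d u v w i.castSucc (Fin.last k) = u i := by
  simp [arrowM]

@[simp] lemma arrowM_lc {k : ℕ} (d u v : Fin k → R) (w : R) (j : Fin k) :
    arrowM d u v w (Fin.last k) j.castSucc = v j := by
  simp [arrowM]

@[simp] lemma arrowM_ll {k : ℕ} (d u v : Fin k → R) (w : R) :
    arrowM d u v w (Fin.last k) (Fin.last k) = w := by
  simp [arrowM]

lemma arrow_sub {k : ℕ} (d u v : Fin (k+1) → R) (w : R) :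
    (arrowM d u v w).submatrix Fin.succ Fin.succ =
      arrowM (fun i => d i.succ) (fun i => u i.succ) (fun i => v i.succ) w := by
  ext i j
  simp only [Matrix.submatrix_apply]
  refine Fin.lastCases ?_ (fun i' => ?_) i <;> refine Fin.lastCases ?_ (fun j' => ?_) j <;>
    simp only [Fin.succ_last, Fin.succ_castSucc, arrowM_cc, arrowM_cl, arrowM_lc, arrowM_ll,
      Fin.succ_inj]

lemma det_arrow_corner {k : ℕ} (d u v : Fin (k+1) → R) (w : R) :
    ((arrowM d u v w).submatrix Fin.succ Fin.castSucc).det =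
      (-1)^k * v 0 * ∏ i : Fin k, d i.succ := by
  rw [Matrix.det_succ_column_zero, Fin.sum_univ_castSucc]
  have hz : ∀ i' : Fin k,
      ((arrowM d u v w).submatrix Fin.succ Fin.castSucc) i'.castSucc 0 = 0 := by
    intro i'
    simp only [Matrix.submatrix_apply, Fin.succ_castSucc, arrowM_cc,
      if_neg (Fin.succ_ne_zero i')]
  have hlast : ((arrowM d u v w).submatrix Fin.succ Fin.castSucc) (Fin.last k) 0 = v 0 := by
    simp only [Matrix.submatrix_apply, Fin.succ_last, arrowM_lc]
  have hdiag : (((arrowM d u v w).submatrix Fin.succ Fin.castSucc).submatrix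
      (Fin.last k).succAbove Fin.succ) = Matrix.diagonal (fun i : Fin k => d i.succ) := by
    ext i m
    simp only [Matrix.submatrix_apply, Fin.succAbove_last, Fin.succ_castSucc, arrowM_cc,
      Fin.succ_inj, Matrix.diagonal]
    rfl
  simp only [hz, mul_zero, zero_mul, Finset.sum_const_zero, zero_add, hlast, hdiag,
    Matrix.det_diagonal, Fin.val_last]

lemma det_arrow : ∀ {k : ℕ} (d u v : Fin k → R) (w : R),
    (arrowM d u v w).det =
      w * ∏ i, d i - ∑ i, u i * v i * ∏ m, (if m = i then 1 else d m) := by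
  intro k
  induction k with
  | zero =>
    intro d u v w
    have h00 : (0 : Fin 1) = Fin.last 0 := rfl
    rw [Matrix.det_fin_one, h00, arrowM_ll]
    simp
  | succ k ih =>
    intro d u v w
    have h00 : (0 : Fin (k+2)) = (0 : Fin (k+1)).castSucc := rfl
    rw [Matrix.det_succ_row_zero, Fin.sum_univ_castSucc]
    have hz : ∀ j' : Fin (k+1), j' ≠ 0 → arrowM d u v w 0 j'.castSucc = 0 := by
      intro j' hj'
      rw [h00, arrowM_cc, if_neg (fun h => hj' h.symm)]
    have e1 : arrowM d u v w 0 ((0:Fin (k+1)).castSucc) = d 0 := by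
      rw [h00, arrowM_cc, if_pos rfl]
    have e2 : ((0:Fin (k+1)).castSucc).succAbove = (Fin.succ : Fin (k+1) → Fin (k+2)) := by
      rw [Fin.castSucc_zero, Fin.succAbove_zero]
    have hsum : (∑ j' : Fin (k+1), (-1:R)^((j'.castSucc:Fin (k+2)):ℕ) * arrowM d u v w 0 j'.castSucc *
        ((arrowM d u v w).submatrix Fin.succ (j'.castSucc).succAbove).det)
        = d 0 * ((arrowM d u v w).submatrix Fin.succ Fin.succ).det := by
      rw [Finset.sum_eq_single_of_mem 0 (Finset.mem_univ _)
        (fun j' _ hj' => by rw [hz j' hj']; ring)]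
      rw [e1, e2]
      simp
    rw [hsum]
    have e3 : arrowM d u v w 0 (Fin.last (k+1)) = u 0 := by rw [h00, arrowM_cl]
    have e4 : (Fin.last (k+1)).succAbove = (Fin.castSucc : Fin (k+1) → Fin (k+2)) :=
      Fin.succAbove_last
    rw [e3, e4, arrow_sub, ih, det_arrow_corner, Fin.val_last]
    -- RHS expansions
    rw [Fin.prod_univ_succ d, Fin.sum_univ_succ
      (fun i : Fin (k+1) => u i * v i * ∏ m, (if m = i then 1 else d m))]
    have e5 : (∏ m : Fin (k+1), (if m = 0 then 1 else d m)) = ∏ i : Fin k, d i.succ := by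
      rw [Fin.prod_univ_succ]
      simp [Fin.succ_ne_zero]
    have e6 : ∀ i : Fin k, (∏ m : Fin (k+1), (if m = i.succ then 1 else d m))
        = d 0 * ∏ m : Fin k, (if m = i then 1 else d m.succ) := by
      intro i
      rw [Fin.prod_univ_succ]
      simp [Fin.succ_inj, (Fin.succ_ne_zero i).symm]
    have e7 : (∑ i : Fin k, u i.succ * v i.succ * ∏ m : Fin (k+1), (if m = i.succ then 1 else d m))
        = d 0 * ∑ i : Fin k, u i.succ * v i.succ * ∏ m : Fin k, (if m = i then 1 else d m.succ) := by
      rw [Finset.mul_sum]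
      exact Finset.sum_congr rfl (fun i _ => by rw [e6 i]; ring)
    rw [e5, e7]
    have hp : (-1:R)^(k*2) = 1 := by rw [pow_mul, ← pow_mul, mul_comm, pow_mul, neg_one_sq, one_pow]
    ring_nf
    rw [hp, mul_one]

section
variable {M : Type*}

lemma prod_fin_icc [CommMonoid M] (k : ℕ) (f : ℕ → M) :
    ∏ i : Fin k, f ((i:ℕ)+1) = ∏ i ∈ Finset.Icc 1 k, f i := by
  rw [← Finset.Ico_add_one_right_eq_Icc, Finset.prod_Ico_eq_prod_range, Nat.add_sub_cancel,
    Fin.prod_univ_eq_prod_range (fun i => f (i+1))]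
  exact Finset.prod_congr rfl fun i _ => by rw [add_comm]

lemma sum_fin_icc [AddCommMonoid M] (k : ℕ) (f : ℕ → M) :
    ∑ i : Fin k, f ((i:ℕ)+1) = ∑ i ∈ Finset.Icc 1 k, f i := by
  rw [← Finset.Ico_add_one_right_eq_Icc, Finset.sum_Ico_eq_sum_range, Nat.add_sub_cancel,
    Fin.sum_univ_eq_sum_range (fun i => f (i+1))]
  exact Finset.sum_congr rfl fun i _ => by rw [add_comm]

end

lemma charmatrix_zarrow (k : ℕ) (b : ℕ → ℝ) (w : ℝ) (z : ℕ → ℂ) :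
    charmatrix (Zarrow k b w z) =
      arrowM (fun i : Fin k => X - C (b ((i:ℕ)+1) : ℂ))
        (fun i => -C ((starRingEnd ℂ) (z ((i:ℕ)+1))))
        (fun i => -C (z ((i:ℕ)+1))) (X - C (w:ℂ)) := by
  ext i j : 2
  refine Fin.lastCases ?_ (fun i' => ?_) i <;> refine Fin.lastCases ?_ (fun j' => ?_) j
  · rw [charmatrix_apply_eq, arrowM_ll]
    simp [Zarrow]
  · rw [charmatrix_apply_ne _ _ _ (Fin.ne_of_lt (Fin.castSucc_lt_last j')).symm, arrowM_lc]
    simp [Zarrow, Fin.is_lt]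
  · rw [charmatrix_apply_ne _ _ _ (Fin.ne_of_lt (Fin.castSucc_lt_last i')), arrowM_cl]
    simp [Zarrow, Fin.is_lt]
  · rcases eq_or_ne i' j' with h | h
    · subst h
      rw [charmatrix_apply_eq, arrowM_cc, if_pos rfl]
      simp [Zarrow, Fin.is_lt]
    · have hne : i'.castSucc ≠ j'.castSucc := by simpa [Fin.castSucc_inj] using h
      rw [charmatrix_apply_ne _ _ _ hne, arrowM_cc, if_neg h]
      simp [Zarrow, hne, Fin.is_lt]

lemma charpoly_zarrow (k : ℕ) (b : ℕ → ℝ) (w : ℝ) (z : ℕ → ℂ) :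
    (Zarrow k b w z).charpoly =
      (X - C (w:ℂ)) * ∏ i ∈ Finset.Icc 1 k, (X - C (b i : ℂ)) -
        ∑ i ∈ Finset.Icc 1 k, C ((starRingEnd ℂ) (z i) * z i) *
          ∏ m ∈ Finset.Icc 1 k, (if m = i then 1 else (X - C (b m : ℂ))) := by
  rw [Matrix.charpoly, charmatrix_zarrow, det_arrow]
  congr 1
  · congr 1
    exact prod_fin_icc k (fun n => X - C (b n : ℂ))
  · have step1 : ∀ i : Fin k,
        (-C ((starRingEnd ℂ) (z ((i:ℕ)+1)))) * (-C (z ((i:ℕ)+1))) *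
          ∏ m : Fin k, (if m = i then 1 else (X - C (b ((m:ℕ)+1) : ℂ)))
        = C ((starRingEnd ℂ) (z ((i:ℕ)+1)) * z ((i:ℕ)+1)) *
          ∏ m ∈ Finset.Icc 1 k, (if m = ((i:ℕ)+1) then 1 else (X - C (b m : ℂ))) := by
      intro i
      rw [neg_mul_neg, ← C_mul]
      congr 1
      rw [← prod_fin_icc k (fun n => if n = ((i:ℕ)+1) then 1 else (X - C (b n : ℂ)))]
      refine Finset.prod_congr rfl fun m _ => ?_
      have : (m = i) ↔ ((m:ℕ)+1 = (i:ℕ)+1) := by rw [Fin.ext_iff, add_left_inj]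
      simp only [this]
    rw [Finset.sum_congr rfl (fun i _ => step1 i),
      sum_fin_icc k (fun n => C ((starRingEnd ℂ) (z n) * z n) *
        ∏ m ∈ Finset.Icc 1 k, (if m = n then 1 else (X - C (b m : ℂ))))]

section
variable {M : Type*}

lemma prod_reindex_b [CommMonoid M] (k j l : ℕ) (hj : 1 ≤ j) (hjl : j + l ≤ k) (f : ℕ → M) :
    ∏ i ∈ Finset.Icc 1 (k - l), f (if i < j then i else i + l)
      = ∏ i ∈ Finset.Icc 1 k \ Finset.Ico j (j + l), f i := by
  refine Finset.prod_nbij' (fun i => if i < j then i else i + l)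
    (fun m => if m < j then m else m - l) ?_ ?_ ?_ ?_ (fun a ha => rfl) <;>
    (intro i hi;
      simp only [Finset.mem_Icc, Finset.mem_sdiff, Finset.mem_Ico, not_and, not_lt] at hi ⊢;
      split_ifs <;> omega)

lemma sum_reindex_b [AddCommMonoid M] (k j l : ℕ) (hj : 1 ≤ j) (hjl : j + l ≤ k) (f : ℕ → M) :
    ∑ i ∈ Finset.Icc 1 (k - l), f (if i < j then i else i + l)
      = ∑ i ∈ Finset.Icc 1 k \ Finset.Ico j (j + l), f i := by
  refine Finset.sum_nbij' (fun i => if i < j then i else i + l)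
    (fun m => if m < j then m else m - l) ?_ ?_ ?_ ?_ (fun a ha => rfl) <;>
    (intro i hi;
      simp only [Finset.mem_Icc, Finset.mem_sdiff, Finset.mem_Ico, not_and, not_lt] at hi ⊢;
      split_ifs <;> omega)

lemma prod_reindex_a [CommMonoid M] (k j l : ℕ) (hj : 1 ≤ j) (hjl : j + l ≤ k) (f : ℕ → M) :
    ∏ i ∈ Finset.Icc 1 (k - l + 1), f (if i ≤ j then i else i + l)
      = ∏ i ∈ Finset.Icc 1 (k + 1) \ Finset.Icc (j + 1) (j + l), f i := by
  refine Finset.prod_nbij' (fun i => if i ≤ j then i else i + l)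
    (fun m => if m ≤ j then m else m - l) ?_ ?_ ?_ ?_ (fun a ha => rfl) <;>
    (intro i hi;
      simp only [Finset.mem_Icc, Finset.mem_sdiff, not_and, not_le] at hi ⊢;
      split_ifs <;> omega)

lemma sum_reindex_a [AddCommMonoid M] (k j l : ℕ) (hj : 1 ≤ j) (hjl : j + l ≤ k) (f : ℕ → M) :
    ∑ i ∈ Finset.Icc 1 (k - l + 1), f (if i ≤ j then i else i + l)
      = ∑ i ∈ Finset.Icc 1 (k + 1) \ Finset.Icc (j + 1) (j + l), f i := by
  refine Finset.sum_nbij' (fun i => if i ≤ j then i else i + l)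
    (fun m => if m ≤ j then m else m - l) ?_ ?_ ?_ ?_ (fun a ha => rfl) <;>
    (intro i hi;
      simp only [Finset.mem_Icc, Finset.mem_sdiff, not_and, not_le] at hi ⊢;
      split_ifs <;> omega)
end
/-- case (1).  Suppose `1 ≤ j`, `ℓ ≥ 1`, `j + ℓ ≤ k` and
`a_j > b_j = a_{j+1} = ⋯ = a_{j+ℓ} > b_{j+ℓ}` (1-based).  Let `a′` be obtained from `a` by
deleting `a_{j+1}, …, a_{j+ℓ}` and `b′` from `b` by deleting `b_j, …, b_{j+ℓ−1}`.
Then `z ∈ Ã_{k+1}(a,b)` iff `z_j = ⋯ = z_{j+ℓ−1} = 0` and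
`(z₁, …, z_{j−1}, z_{j+ℓ}, …, z_k) ∈ Ã_{k−ℓ+1}(a′, b′)`. -/
theorem statement7 (k : ℕ) (hk : 1 ≤ k) (a b : ℕ → ℝ)
    (hab : ∀ i, 1 ≤ i → i ≤ k → b i ≤ a i ∧ a (i + 1) ≤ b i)
    (j l : ℕ) (hj : 1 ≤ j) (hl : 1 ≤ l) (hjl : j + l ≤ k)
    (hlt1 : b j < a j)
    (heq : ∀ m, j + 1 ≤ m → m ≤ j + l → a m = b j)
    (hlt2 : b (j + l) < b j) :
    ∀ z : ℕ → ℂ,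
      z ∈ Atilde k a b ↔
        ((∀ m, j ≤ m → m < j + l → z m = 0) ∧
          (fun m => if m < j then z m else z (m + l)) ∈
            Atilde (k - l) (fun m => if m ≤ j then a m else a (m + l))
              (fun m => if m < j then b m else b (m + l))) := by
  intro z
  set c : ℝ := b j with hc
  -- monotonicity facts
  have amono : ∀ p q, 1 ≤ p → p ≤ q → q ≤ k + 1 → a q ≤ a p := by
    intro p q hp hpq hq
    induction q, hpq using Nat.le_induction with
    | base => exact le_refl _
    | succ q hq' ih =>
      have h1 := hab q (le_trans hp hq') (by omega)
      exact le_trans (h1.2.trans h1.1) (ih (by omega))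
  have bmono : ∀ p q, 1 ≤ p → p ≤ q → q ≤ k → b q ≤ b p := by
    intro p q hp hpq hq
    induction q, hpq using Nat.le_induction with
    | base => exact le_refl _
    | succ q hq' ih =>
      have h1 := hab (q+1) (by omega) hq
      have h2 := hab q (le_trans hp hq') (by omega)
      exact le_trans (h1.1.trans h2.2) (ih (by omega))
  have hbc : ∀ m, j ≤ m → m < j + l → b m = c := by
    intro m h1 h2
    rcases eq_or_lt_of_le h1 with h | hltm
    · rw [← h]
    · have h3 := hab m (by omega) (by omega)
      have e1 : a m = c := heq m (by omega) (by omega)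
      have e2 : a (m+1) = c := heq (m+1) (by omega) (by omega)
      have := h3.1
      have := h3.2
      linarith
  have hbne : ∀ m ∈ Finset.Icc 1 k \ Finset.Ico j (j + l), b m ≠ c := by
    intro m hm
    simp only [Finset.mem_Icc, Finset.mem_sdiff, Finset.mem_Ico, not_and, not_lt] at hm
    obtain ⟨⟨h1, h2⟩, h3⟩ := hm
    rcases lt_or_ge m j with hmj | hmj
    · have h4 := amono (m+1) j (by omega) (by omega) (by omega)
      have h5 := (hab m (by omega) (by omega)).2
      intro hEq; linarith
    · have h6 := bmono (j+l) m (by omega) (h3 hmj) h2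
      intro hEq; linarith
  -- polynomial abbreviations
  set t : Polynomial ℂ := X - C (c:ℂ) with ht
  set Pb' : Polynomial ℂ := ∏ m ∈ Finset.Icc 1 k \ Finset.Ico j (j + l), (X - C (b m : ℂ)) with hPb'
  set Pa' : Polynomial ℂ :=
    ∏ m ∈ Finset.Icc 1 (k+1) \ Finset.Icc (j+1) (j+l), (X - C (a m : ℂ)) with hPa'
  set Q' : ℕ → Polynomial ℂ := fun i =>
    ∏ m ∈ Finset.Icc 1 k \ Finset.Ico j (j + l), (if m = i then 1 else (X - C (b m : ℂ)))
    with hQ'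
  set w : ℝ := (∑ i ∈ Finset.Icc 1 (k+1), a i) - ∑ i ∈ Finset.Icc 1 k, b i with hw
  set Sb : ℂ := ∑ i ∈ Finset.Ico j (j+l), ((starRingEnd ℂ) (z i) * z i) with hSb
  set Gz : Polynomial ℂ := (X - C (w:ℂ)) * Pb' -
    (∑ i ∈ Finset.Icc 1 k \ Finset.Ico j (j + l),
      C ((starRingEnd ℂ) (z i) * z i) * Q' i) - Pa' with hGz
  have hsub : Finset.Ico j (j+l) ⊆ Finset.Icc 1 k := by
    intro m hm; simp only [Finset.mem_Ico, Finset.mem_Icc] at *; omega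
  have hsubA : Finset.Icc (j+1) (j+l) ⊆ Finset.Icc 1 (k+1) := by
    intro m hm; simp only [Finset.mem_Icc] at *; omega
  have cardb : (Finset.Ico j (j+l)).card = l := by rw [Nat.card_Ico]; omega
  have carda : (Finset.Icc (j+1) (j+l)).card = l := by rw [Nat.card_Icc]; omega
  have htl : t ^ l = t ^ (l-1) * t := by rw [← pow_succ]; congr 1; omega
  have htne : t ≠ 0 := Polynomial.X_sub_C_ne_zero _
  -- decomposition of the full products
  have hPbf : ∏ i ∈ Finset.Icc 1 k, (X - C (b i:ℂ)) = Pb' * t ^ l := by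
    rw [← Finset.prod_sdiff hsub, ← hPb']
    congr 1
    calc ∏ m ∈ Finset.Ico j (j+l), (X - C (b m:ℂ))
        = ∏ _m ∈ Finset.Ico j (j+l), t := by
          refine Finset.prod_congr rfl fun m hm => ?_
          simp only [Finset.mem_Ico] at hm
          rw [hbc m hm.1 hm.2, ht]
      _ = t ^ l := by rw [Finset.prod_const, cardb]
  have hPaf : ∏ i ∈ Finset.Icc 1 (k+1), (X - C (a i:ℂ)) = Pa' * t ^ l := by
    rw [← Finset.prod_sdiff hsubA, ← hPa']
    congr 1
    calc ∏ m ∈ Finset.Icc (j+1) (j+l), (X - C (a m:ℂ))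
        = ∏ _m ∈ Finset.Icc (j+1) (j+l), t := by
          refine Finset.prod_congr rfl fun m hm => ?_
          simp only [Finset.mem_Icc] at hm
          rw [heq m hm.1 hm.2, ht]
      _ = t ^ l := by rw [Finset.prod_const, carda]
  have hQf : ∀ i ∈ Finset.Icc 1 k \ Finset.Ico j (j+l),
      (∏ m ∈ Finset.Icc 1 k, (if m = i then 1 else (X - C (b m:ℂ)))) = Q' i * t ^ l := by
    intro i hi
    have hiIco : i ∉ Finset.Ico j (j+l) := (Finset.mem_sdiff.mp hi).2
    rw [← Finset.prod_sdiff hsub]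
    congr 1
    calc ∏ m ∈ Finset.Ico j (j+l), (if m = i then 1 else (X - C (b m:ℂ)))
        = ∏ _m ∈ Finset.Ico j (j+l), t := by
          refine Finset.prod_congr rfl fun m hm => ?_
          simp only [Finset.mem_Ico] at hm
          rw [if_neg (fun h => hiIco (by rw [← h]; exact Finset.mem_Ico.mpr hm)),
            hbc m hm.1 hm.2, ht]
      _ = t ^ l := by rw [Finset.prod_const, cardb]
  have hQb : ∀ i ∈ Finset.Ico j (j+l),
      (∏ m ∈ Finset.Icc 1 k, (if m = i then 1 else (X - C (b m:ℂ)))) = Pb' * t ^ (l-1) := by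
    intro i hi
    rw [← Finset.prod_sdiff hsub]
    congr 1
    · refine Finset.prod_congr rfl fun m hm => ?_
      exact if_neg (fun h => (Finset.mem_sdiff.mp hm).2 (by rw [h]; exact hi))
    · rw [← Finset.mul_prod_erase _ _ hi, if_pos rfl, one_mul]
      calc ∏ m ∈ (Finset.Ico j (j+l)).erase i, (if m = i then 1 else (X - C (b m:ℂ)))
          = ∏ _m ∈ (Finset.Ico j (j+l)).erase i, t := by
            refine Finset.prod_congr rfl fun m hm => ?_
            obtain ⟨hm1, hm2⟩ := Finset.mem_erase.mp hm
            simp only [Finset.mem_Ico] at hm2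
            rw [if_neg hm1, hbc m hm2.1 hm2.2, ht]
        _ = t ^ (l-1) := by rw [Finset.prod_const, Finset.card_erase_of_mem hi, cardb]
  -- Step A
  have hA : (z ∈ Atilde k a b) ↔ t * Gz = C Sb * Pb' := by
    simp only [Atilde, Zab, Set.mem_setOf_eq]
    rw [charpoly_zarrow, ← hw, hPbf, hPaf, ← Finset.sum_sdiff hsub]
    have eS : (∑ i ∈ Finset.Icc 1 k \ Finset.Ico j (j+l),
        C ((starRingEnd ℂ) (z i) * z i) *
          ∏ m ∈ Finset.Icc 1 k, (if m = i then 1 else (X - C (b m:ℂ))))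
        = ∑ i ∈ Finset.Icc 1 k \ Finset.Ico j (j+l),
            C ((starRingEnd ℂ) (z i) * z i) * (Q' i * t ^ l) :=
      Finset.sum_congr rfl (fun i hi => by rw [hQf i hi])
    have eB : (∑ i ∈ Finset.Ico j (j+l),
        C ((starRingEnd ℂ) (z i) * z i) *
          ∏ m ∈ Finset.Icc 1 k, (if m = i then 1 else (X - C (b m:ℂ))))
        = ∑ i ∈ Finset.Ico j (j+l),
            C ((starRingEnd ℂ) (z i) * z i) * (Pb' * t ^ (l-1)) :=
      Finset.sum_congr rfl (fun i hi => by rw [hQb i hi])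
    rw [eS, eB]
    have e1 : ∑ i ∈ Finset.Icc 1 k \ Finset.Ico j (j+l),
        C ((starRingEnd ℂ) (z i) * z i) * (Q' i * t ^ l)
        = (∑ i ∈ Finset.Icc 1 k \ Finset.Ico j (j+l),
            C ((starRingEnd ℂ) (z i) * z i) * Q' i) * t ^ l := by
      rw [Finset.sum_mul]
      exact Finset.sum_congr rfl fun i _ => by ring
    have e2 : ∑ i ∈ Finset.Ico j (j+l),
        C ((starRingEnd ℂ) (z i) * z i) * (Pb' * t ^ (l-1))
        = C Sb * Pb' * t ^ (l-1) := by
      rw [hSb, map_sum, Finset.sum_mul, Finset.sum_mul]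
      exact Finset.sum_congr rfl fun i _ => by ring
    rw [e1, e2, ← sub_eq_zero, ← sub_eq_zero (a := t * Gz)]
    have hdiff : (X - C ((w:ℝ):ℂ)) * (Pb' * t ^ l) -
        ((∑ i ∈ Finset.Icc 1 k \ Finset.Ico j (j+l),
            C ((starRingEnd ℂ) (z i) * z i) * Q' i) * t ^ l + C Sb * Pb' * t ^ (l-1)) -
        Pa' * t ^ l
        = t ^ (l-1) * (t * Gz - C Sb * Pb') := by
      rw [hGz, htl]; ring
    rw [hdiff, mul_eq_zero]
    have : t ^ (l-1) ≠ 0 := pow_ne_zero _ htne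
    simp [this]
  -- Step B
  have hB : ((fun m => if m < j then z m else z (m + l)) ∈
      Atilde (k - l) (fun m => if m ≤ j then a m else a (m + l))
        (fun m => if m < j then b m else b (m + l))) ↔ Gz = 0 := by
    simp only [Atilde, Zab, Set.mem_setOf_eq]
    rw [charpoly_zarrow]
    have hw' : ((∑ i ∈ Finset.Icc 1 (k - l + 1), (if i ≤ j then a i else a (i+l))) -
        ∑ i ∈ Finset.Icc 1 (k - l), (if i < j then b i else b (i+l))) = w := by
      have ea : ∑ i ∈ Finset.Icc 1 (k - l + 1), (if i ≤ j then a i else a (i+l))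
          = ∑ i ∈ Finset.Icc 1 (k+1) \ Finset.Icc (j+1) (j+l), a i := by
        rw [← sum_reindex_a k j l hj hjl a]
        exact Finset.sum_congr rfl fun i _ => by split_ifs <;> rfl
      have eb : ∑ i ∈ Finset.Icc 1 (k - l), (if i < j then b i else b (i+l))
          = ∑ i ∈ Finset.Icc 1 k \ Finset.Ico j (j+l), b i := by
        rw [← sum_reindex_b k j l hj hjl b]
        exact Finset.sum_congr rfl fun i _ => by split_ifs <;> rfl
      have ea2 : ∑ i ∈ Finset.Icc (j+1) (j+l), a i = l * c := by
        rw [Finset.sum_congr rfl (fun m hm => by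
          simp only [Finset.mem_Icc] at hm; exact heq m hm.1 hm.2),
          Finset.sum_const, carda, nsmul_eq_mul]
      have eb2 : ∑ i ∈ Finset.Ico j (j+l), b i = l * c := by
        rw [Finset.sum_congr rfl (fun m hm => by
          simp only [Finset.mem_Ico] at hm; exact hbc m hm.1 hm.2),
          Finset.sum_const, cardb, nsmul_eq_mul]
      have ha3 := Finset.sum_sdiff hsubA (f := a)
      have hb3 := Finset.sum_sdiff hsub (f := b)
      rw [ea, eb, hw]
      rw [ea2] at ha3
      rw [eb2] at hb3
      linarith
    rw [hw']
    have hPb'' : ∏ i ∈ Finset.Icc 1 (k - l),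
        (X - C ((if i < j then b i else b (i+l) : ℝ) : ℂ)) = Pb' := by
      rw [hPb', ← prod_reindex_b k j l hj hjl (fun n => X - C (b n : ℂ))]
      exact Finset.prod_congr rfl fun i _ => by split_ifs <;> rfl
    have hPa'' : ∏ i ∈ Finset.Icc 1 (k - l + 1),
        (X - C ((if i ≤ j then a i else a (i+l) : ℝ) : ℂ)) = Pa' := by
      rw [hPa', ← prod_reindex_a k j l hj hjl (fun n => X - C (a n : ℂ))]
      exact Finset.prod_congr rfl fun i _ => by split_ifs <;> rfl
    have hSig : ∑ i ∈ Finset.Icc 1 (k - l),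
        C ((starRingEnd ℂ) (if i < j then z i else z (i+l)) * (if i < j then z i else z (i+l))) *
          ∏ m ∈ Finset.Icc 1 (k - l),
            (if m = i then 1 else (X - C ((if m < j then b m else b (m+l) : ℝ) : ℂ)))
        = ∑ i ∈ Finset.Icc 1 k \ Finset.Ico j (j+l),
            C ((starRingEnd ℂ) (z i) * z i) * Q' i := by
      rw [← sum_reindex_b k j l hj hjl
        (fun n => C ((starRingEnd ℂ) (z n) * z n) * Q' n)]
      refine Finset.sum_congr rfl fun i hi => ?_
      simp only [Finset.mem_Icc] at hi
      have hinner : ∏ m ∈ Finset.Icc 1 (k - l),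
          (if m = i then 1 else (X - C ((if m < j then b m else b (m+l) : ℝ) : ℂ)))
          = Q' (if i < j then i else i + l) := by
        simp only [hQ']
        rw [← prod_reindex_b k j l hj hjl
          (fun n => if n = (if i < j then i else i + l) then 1 else (X - C (b n : ℂ)))]
        refine Finset.prod_congr rfl fun m hm => ?_
        simp only [Finset.mem_Icc] at hm
        by_cases hmi : m = i
        · rw [if_pos hmi, if_pos (by subst hmi; rfl)]
        · have h2 : ¬((if m < j then m else m + l) = (if i < j then i else i + l)) := by
            split_ifs <;> omega
          rw [if_neg hmi, if_neg h2]
          split_ifs <;> rfl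
      rw [hinner]
      split_ifs <;> rfl
    rw [hPb'', hPa'', hSig, ← sub_eq_zero, hGz]
  -- Step C
  have hC : (∀ m, j ≤ m → m < j + l → z m = 0) ↔ Sb = 0 := by
    constructor
    · intro h
      refine Finset.sum_eq_zero fun i hi => ?_
      simp only [Finset.mem_Ico] at hi
      rw [h i hi.1 hi.2, mul_zero]
    · intro h m hm1 hm2
      have hr : Sb = ((∑ i ∈ Finset.Ico j (j+l), Complex.normSq (z i) : ℝ) : ℂ) := by
        rw [hSb]
        push_cast
        exact Finset.sum_congr rfl fun i _ => by
          rw [mul_comm, Complex.mul_conj]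
      rw [hr] at h
      norm_cast at h
      have h2 := (Finset.sum_eq_zero_iff_of_nonneg
        (fun i _ => Complex.normSq_nonneg (z i))).mp h m
        (Finset.mem_Ico.mpr ⟨hm1, hm2⟩)
      exact Complex.normSq_eq_zero.mp h2
  -- assemble
  rw [hA, hB, hC]
  constructor
  · intro h
    have hPbc : Polynomial.eval (c:ℂ) Pb' ≠ 0 := by
      rw [hPb', Polynomial.eval_prod]
      refine Finset.prod_ne_zero_iff.mpr fun m hm => ?_
      simp only [Polynomial.eval_sub, Polynomial.eval_X, Polynomial.eval_C]
      refine sub_ne_zero.mpr fun hh => ?_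
      exact hbne m hm (Complex.ofReal_inj.mp hh).symm
    have hev := congrArg (Polynomial.eval (c:ℂ)) h
    rw [ht] at hev
    simp only [Polynomial.eval_mul, Polynomial.eval_sub, Polynomial.eval_X,
      Polynomial.eval_C, sub_self, zero_mul] at hev
    have hSb0 : Sb = 0 := by
      rcases mul_eq_zero.mp hev.symm with h' | h'
      · exact h'
      · exact absurd h' hPbc
    refine ⟨hSb0, ?_⟩
    rw [hSb0, map_zero, zero_mul] at h
    rcases mul_eq_zero.mp h with h' | h'
    · exact absurd h' htne
    · exact h'
  · rintro ⟨hSb0, hG0⟩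
    rw [hSb0, hG0, map_zero, zero_mul, mul_zero]
end
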